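/- Let (Ω, ℱ, μ) be a probability space, c₁, c₂ : Ω → ℝ nonnegative integrable measurable functions, and m a real number with 0 ≤ m < ∫ c₁ dμ. Assume μ({c₁ = 0}) = 0, μ({c₂ = 0}) = 0, and μ({ω : λ c₁(ω) = (1−λ) c₂(ω)}) = 0 for every λ ∈ (0,1). Then there exists λ* ∈ (0,1) such that the threshold policy q_{λ*} maximizes the throughput over all measurable q : Ω → [0,1], and the maximum throughput equals sup_q min{∫ q c₁ dμ, ∫ (1−q) c₂ dμ + m} = ∫ q_{λ*} c₁ dμ = ∫ (1−q_{λ*}) c₂ dμ + m. -/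

import Mathlib

open MeasureTheory Filter

/-- Threshold (bang-bang) policy: receive (`q = 1`) iff `λ c₁ ≥ (1-λ) c₂`. -/
noncomputable def thresholdPolicy {Ω : Type*} (c₁ c₂ : Ω → ℝ) (l : ℝ) (ω : Ω) : ℝ :=
  if (1 - l) * c₂ ω ≤ l * c₁ ω then 1 else 0

section Aux

variable {Ω : Type*} [MeasurableSpace Ω] {μ : Measure Ω} {c₁ c₂ : Ω → ℝ}

lemma thresholdPolicy_mem (c₁ c₂ : Ω → ℝ) (l : ℝ) (ω : Ω) :
    thresholdPolicy c₁ c₂ l ω ∈ Set.Icc (0:ℝ) 1 := by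
  unfold thresholdPolicy; split <;> norm_num

lemma measurable_thresholdPolicy (hc₁ : Measurable c₁) (hc₂ : Measurable c₂) (l : ℝ) :
    Measurable (thresholdPolicy c₁ c₂ l) :=
  Measurable.ite (measurableSet_le (hc₂.const_mul _) (hc₁.const_mul _))
    measurable_const measurable_const

lemma integrable_mul_policy {q g : Ω → ℝ} (hq : Measurable q)
    (hq01 : ∀ ω, q ω ∈ Set.Icc (0:ℝ) 1) (hg : Integrable g μ) :
    Integrable (fun ω => q ω * g ω) μ :=
  hg.bdd_mul (c := 1) hq.aestronglyMeasurable (Eventually.of_forall fun ω => by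
    rw [Real.norm_eq_abs, abs_le]; exact ⟨by linarith [(hq01 ω).1], (hq01 ω).2⟩)

lemma continuousAt_threshold_integral {g : Ω → ℝ} (hg : Integrable g μ)
    (hmc₁ : Measurable c₁) (hmc₂ : Measurable c₂)
    (l₀ : ℝ) (htie : μ {ω | l₀ * c₁ ω = (1 - l₀) * c₂ ω} = 0) :
    ContinuousAt (fun l => ∫ ω, thresholdPolicy c₁ c₂ l ω * g ω ∂μ) l₀ := by
  have hae : ∀ᵐ ω ∂μ, l₀ * c₁ ω ≠ (1 - l₀) * c₂ ω := by
    rw [ae_iff]; simpa using htie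
  apply tendsto_integral_filter_of_dominated_convergence (fun ω => |g ω|)
  · exact Eventually.of_forall fun l =>
      ((measurable_thresholdPolicy hmc₁ hmc₂ l).aestronglyMeasurable.mul
        hg.aestronglyMeasurable)
  · refine Eventually.of_forall fun l => Eventually.of_forall fun ω => ?_
    rw [Real.norm_eq_abs, abs_mul]
    have h1 : |thresholdPolicy c₁ c₂ l ω| ≤ 1 := by
      unfold thresholdPolicy; split <;> norm_num
    calc |thresholdPolicy c₁ c₂ l ω| * |g ω| ≤ 1 * |g ω| :=
          mul_le_mul_of_nonneg_right h1 (abs_nonneg _)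
      _ = |g ω| := one_mul _
  · exact hg.abs
  · filter_upwards [hae] with ω hω
    have hc : ContinuousAt (fun l : ℝ => l * c₁ ω) l₀ :=
      (continuous_id.mul continuous_const).continuousAt
    have hc' : ContinuousAt (fun l : ℝ => (1 - l) * c₂ ω) l₀ :=
      ((continuous_const.sub continuous_id).mul continuous_const).continuousAt
    rcases lt_or_gt_of_ne hω with h | h
    · -- l₀ * c₁ ω < (1 - l₀) * c₂ ω : threshold is 0 near l₀
      have hev : ∀ᶠ lx in nhds l₀, lx * c₁ ω < (1 - lx) * c₂ ω :=
        hc.eventually_lt hc' h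
      have heq : (fun lx => thresholdPolicy c₁ c₂ lx ω * g ω) =ᶠ[nhds l₀]
          fun _ => thresholdPolicy c₁ c₂ l₀ ω * g ω := by
        filter_upwards [hev] with lx hlx
        have h0 : thresholdPolicy c₁ c₂ lx ω = 0 := if_neg (not_le.mpr hlx)
        have h0' : thresholdPolicy c₁ c₂ l₀ ω = 0 := if_neg (not_le.mpr h)
        rw [h0, h0']
      exact Filter.Tendsto.congr' heq.symm tendsto_const_nhds
    · -- (1 - l₀) * c₂ ω < l₀ * c₁ ω : threshold is 1 near l₀
      have hev : ∀ᶠ lx in nhds l₀, (1 - lx) * c₂ ω < lx * c₁ ω :=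
        hc'.eventually_lt hc h
      have heq : (fun lx => thresholdPolicy c₁ c₂ lx ω * g ω) =ᶠ[nhds l₀]
          fun _ => thresholdPolicy c₁ c₂ l₀ ω * g ω := by
        filter_upwards [hev] with lx hlx
        have h0 : thresholdPolicy c₁ c₂ lx ω = 1 := if_pos hlx.le
        have h0' : thresholdPolicy c₁ c₂ l₀ ω = 1 := if_pos h.le
        rw [h0, h0']
      exact Filter.Tendsto.congr' heq.symm tendsto_const_nhds

end Aux
set_option maxHeartbeats 1000000 in
/-- Under the stated nondegeneracy conditions and `0 ≤ m < ∫ c₁`, there exists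
`λ* ∈ (0,1)` such that the threshold policy `q_{λ*}` maximizes the throughput
over all policies, and the maximum throughput equals
`sup_q min{∫ q c₁, ∫ (1-q) c₂ + m} = ∫ q_{λ*} c₁ = ∫ (1-q_{λ*}) c₂ + m`. -/
theorem exists_optimal_threshold_policy
    {Ω : Type*} [MeasurableSpace Ω] (μ : Measure Ω) [IsProbabilityMeasure μ]
    (c₁ c₂ : Ω → ℝ) (hmc₁ : Measurable c₁) (hmc₂ : Measurable c₂)
    (hic₁ : Integrable c₁ μ) (hic₂ : Integrable c₂ μ)
    (hnc₁ : ∀ ω, 0 ≤ c₁ ω) (hnc₂ : ∀ ω, 0 ≤ c₂ ω)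
    (m : ℝ) (hm0 : 0 ≤ m) (hm1 : m < ∫ ω, c₁ ω ∂μ)
    (hc₁pos : μ {ω | c₁ ω = 0} = 0) (hc₂pos : μ {ω | c₂ ω = 0} = 0)
    (hnotie : ∀ l ∈ Set.Ioo (0 : ℝ) 1, μ {ω | l * c₁ ω = (1 - l) * c₂ ω} = 0) :
    ∃ l ∈ Set.Ioo (0 : ℝ) 1,
      (∀ q : Ω → ℝ, Measurable q → (∀ ω, q ω ∈ Set.Icc (0 : ℝ) 1) →
        min (∫ ω, q ω * c₁ ω ∂μ) ((∫ ω, (1 - q ω) * c₂ ω ∂μ) + m)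
          ≤ min (∫ ω, thresholdPolicy c₁ c₂ l ω * c₁ ω ∂μ)
              ((∫ ω, (1 - thresholdPolicy c₁ c₂ l ω) * c₂ ω ∂μ) + m)) ∧
      sSup {t : ℝ | ∃ q : Ω → ℝ, Measurable q ∧ (∀ ω, q ω ∈ Set.Icc (0 : ℝ) 1) ∧
          t = min (∫ ω, q ω * c₁ ω ∂μ) ((∫ ω, (1 - q ω) * c₂ ω ∂μ) + m)}
        = ∫ ω, thresholdPolicy c₁ c₂ l ω * c₁ ω ∂μ ∧
      (∫ ω, thresholdPolicy c₁ c₂ l ω * c₁ ω ∂μ)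
        = (∫ ω, (1 - thresholdPolicy c₁ c₂ l ω) * c₂ ω ∂μ) + m := by
  have hqmem := thresholdPolicy_mem c₁ c₂
  have hqmeas : ∀ l : ℝ, Measurable (thresholdPolicy c₁ c₂ l) :=
    fun l => measurable_thresholdPolicy hmc₁ hmc₂ l
  -- integrability of q * cᵢ for any policy q
  have hiF : ∀ q : Ω → ℝ, Measurable q → (∀ ω, q ω ∈ Set.Icc (0:ℝ) 1) →
      Integrable (fun ω => q ω * c₁ ω) μ :=
    fun q hq h01 => integrable_mul_policy hq h01 hic₁
  have hiG : ∀ q : Ω → ℝ, Measurable q → (∀ ω, q ω ∈ Set.Icc (0:ℝ) 1) →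
      Integrable (fun ω => q ω * c₂ ω) μ :=
    fun q hq h01 => integrable_mul_policy hq h01 hic₂
  -- ∫ (1-q) c₂ = ∫ c₂ - ∫ q c₂
  have hsub : ∀ q : Ω → ℝ, Measurable q → (∀ ω, q ω ∈ Set.Icc (0:ℝ) 1) →
      ∫ ω, (1 - q ω) * c₂ ω ∂μ = (∫ ω, c₂ ω ∂μ) - ∫ ω, q ω * c₂ ω ∂μ := by
    intro q hq h01
    rw [← integral_sub hic₂ (hiG q hq h01)]
    congr 1; funext ω; ring
  -- ∫ c₂ > 0
  have hI₂pos : 0 < ∫ ω, c₂ ω ∂μ := by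
    by_contra h
    push_neg at h
    have heq : ∫ ω, c₂ ω ∂μ = 0 := le_antisymm h (integral_nonneg hnc₂)
    rw [integral_eq_zero_iff_of_nonneg hnc₂ hic₂] at heq
    have h0 : μ {ω | ¬ c₂ ω = 0} = 0 := heq
    have huniv : μ Set.univ ≤ μ {ω | c₂ ω = 0} + μ {ω | ¬ c₂ ω = 0} := by
      refine le_trans (measure_mono ?_) (measure_union_le _ _)
      intro ω _
      by_cases hc : c₂ ω = 0
      · exact Or.inl hc
      · exact Or.inr hc
    rw [hc₂pos, h0, measure_univ] at huniv
    simp at huniv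
  -- values at the endpoints
  have hae2 : ∀ᵐ ω ∂μ, c₂ ω ≠ 0 := by rw [ae_iff]; simpa using hc₂pos
  have hF0 : (∫ ω, thresholdPolicy c₁ c₂ 0 ω * c₁ ω ∂μ) = 0 := by
    have h : (fun ω => thresholdPolicy c₁ c₂ 0 ω * c₁ ω) =ᵐ[μ] 0 := by
      filter_upwards [hae2] with ω hω
      have hpos : 0 < c₂ ω := lt_of_le_of_ne (hnc₂ ω) (Ne.symm hω)
      have hno : ¬ ((1 - (0:ℝ)) * c₂ ω ≤ 0 * c₁ ω) := by
        simp only [sub_zero, one_mul, zero_mul]; linarith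
      show (if (1 - (0:ℝ)) * c₂ ω ≤ 0 * c₁ ω then (1:ℝ) else 0) * c₁ ω = (0 : Ω → ℝ) ω
      rw [if_neg hno, zero_mul]; rfl
    rw [integral_congr_ae h]; simp
  have hG0 : (∫ ω, thresholdPolicy c₁ c₂ 0 ω * c₂ ω ∂μ) = 0 := by
    have h : (fun ω => thresholdPolicy c₁ c₂ 0 ω * c₂ ω) =ᵐ[μ] 0 := by
      filter_upwards [hae2] with ω hω
      have hpos : 0 < c₂ ω := lt_of_le_of_ne (hnc₂ ω) (Ne.symm hω)
      have hno : ¬ ((1 - (0:ℝ)) * c₂ ω ≤ 0 * c₁ ω) := by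
        simp only [sub_zero, one_mul, zero_mul]; linarith
      show (if (1 - (0:ℝ)) * c₂ ω ≤ 0 * c₁ ω then (1:ℝ) else 0) * c₂ ω = (0 : Ω → ℝ) ω
      rw [if_neg hno, zero_mul]; rfl
    rw [integral_congr_ae h]; simp
  have hF1 : (∫ ω, thresholdPolicy c₁ c₂ 1 ω * c₁ ω ∂μ) = ∫ ω, c₁ ω ∂μ := by
    refine integral_congr_ae (Filter.Eventually.of_forall fun ω => ?_)
    have hyes : ((1:ℝ) - 1) * c₂ ω ≤ 1 * c₁ ω := by
      simp only [sub_self, zero_mul, one_mul]; exact hnc₁ ω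
    show (if ((1:ℝ) - 1) * c₂ ω ≤ 1 * c₁ ω then (1:ℝ) else 0) * c₁ ω = c₁ ω
    rw [if_pos hyes, one_mul]
  have hG1 : (∫ ω, thresholdPolicy c₁ c₂ 1 ω * c₂ ω ∂μ) = ∫ ω, c₂ ω ∂μ := by
    refine integral_congr_ae (Filter.Eventually.of_forall fun ω => ?_)
    have hyes : ((1:ℝ) - 1) * c₂ ω ≤ 1 * c₁ ω := by
      simp only [sub_self, zero_mul, one_mul]; exact hnc₁ ω
    show (if ((1:ℝ) - 1) * c₂ ω ≤ 1 * c₁ ω then (1:ℝ) else 0) * c₂ ω = c₂ ω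
    rw [if_pos hyes, one_mul]
  -- continuity of the defect function H on [0,1]
  have hcont : ContinuousOn
      (fun l => (∫ ω, thresholdPolicy c₁ c₂ l ω * c₁ ω ∂μ)
        - ((∫ ω, c₂ ω ∂μ) - (∫ ω, thresholdPolicy c₁ c₂ l ω * c₂ ω ∂μ) + m))
      (Set.Icc 0 1) := by
    intro l hl
    have htie : μ {ω | l * c₁ ω = (1 - l) * c₂ ω} = 0 := by
      rcases eq_or_lt_of_le hl.1 with h0 | h0
      · refine measure_mono_null ?_ hc₂pos
        intro ω hω
        simp only [Set.mem_setOf_eq] at hω ⊢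
        rw [← h0] at hω
        simp only [zero_mul, sub_zero, one_mul] at hω
        exact hω.symm
      rcases eq_or_lt_of_le hl.2 with h1 | h1
      · refine measure_mono_null ?_ hc₁pos
        intro ω hω
        simp only [Set.mem_setOf_eq] at hω ⊢
        rw [h1] at hω
        simp only [one_mul, sub_self, zero_mul] at hω
        exact hω
      · exact hnotie l ⟨h0, h1⟩
    exact (((continuousAt_threshold_integral hic₁ hmc₁ hmc₂ l htie).sub
      ((continuousAt_const.sub
        (continuousAt_threshold_integral hic₂ hmc₁ hmc₂ l htie)).add
        continuousAt_const)).continuousWithinAt)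
  -- intermediate value theorem
  have hmem0 : (0:ℝ) ∈ Set.Icc
      ((fun l => (∫ ω, thresholdPolicy c₁ c₂ l ω * c₁ ω ∂μ)
        - ((∫ ω, c₂ ω ∂μ) - (∫ ω, thresholdPolicy c₁ c₂ l ω * c₂ ω ∂μ) + m)) 0)
      ((fun l => (∫ ω, thresholdPolicy c₁ c₂ l ω * c₁ ω ∂μ)
        - ((∫ ω, c₂ ω ∂μ) - (∫ ω, thresholdPolicy c₁ c₂ l ω * c₂ ω ∂μ) + m)) 1) := by
    constructor
    · simp only [hF0, hG0]; linarith
    · simp only [hF1, hG1]; linarith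
  obtain ⟨l, hlmem, hl0⟩ := intermediate_value_Icc zero_le_one hcont hmem0
  have hl0' : (∫ ω, thresholdPolicy c₁ c₂ l ω * c₁ ω ∂μ)
      - ((∫ ω, c₂ ω ∂μ) - (∫ ω, thresholdPolicy c₁ c₂ l ω * c₂ ω ∂μ) + m) = 0 := hl0
  have hlne0 : l ≠ 0 := by
    rintro rfl
    rw [hF0, hG0] at hl0'
    linarith
  have hlne1 : l ≠ 1 := by
    rintro rfl
    rw [hF1, hG1] at hl0'
    linarith
  have hlIoo : l ∈ Set.Ioo (0:ℝ) 1 :=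
    ⟨lt_of_le_of_ne hlmem.1 (Ne.symm hlne0), lt_of_le_of_ne hlmem.2 hlne1⟩
  -- balance equation
  have hbal : (∫ ω, thresholdPolicy c₁ c₂ l ω * c₁ ω ∂μ)
      = (∫ ω, (1 - thresholdPolicy c₁ c₂ l ω) * c₂ ω ∂μ) + m := by
    rw [hsub _ (hqmeas l) (hqmem l)]
    linarith
  -- optimality
  have hopt : ∀ q : Ω → ℝ, Measurable q → (∀ ω, q ω ∈ Set.Icc (0 : ℝ) 1) →
      min (∫ ω, q ω * c₁ ω ∂μ) ((∫ ω, (1 - q ω) * c₂ ω ∂μ) + m)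
        ≤ min (∫ ω, thresholdPolicy c₁ c₂ l ω * c₁ ω ∂μ)
            ((∫ ω, (1 - thresholdPolicy c₁ c₂ l ω) * c₂ ω ∂μ) + m) := by
    intro q hq h01q
    rw [← hbal, min_self]
    have hA := hiF q hq h01q
    have hC := hiG q hq h01q
    have hFt := hiF _ (hqmeas l) (hqmem l)
    have hGt := hiG _ (hqmeas l) (hqmem l)
    have hpt : ∀ ω, l * (q ω * c₁ ω) - (1-l) * (q ω * c₂ ω)
        ≤ l * (thresholdPolicy c₁ c₂ l ω * c₁ ω)
          - (1-l) * (thresholdPolicy c₁ c₂ l ω * c₂ ω) := by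
      intro ω
      unfold thresholdPolicy
      rcases le_or_gt ((1-l) * c₂ ω) (l * c₁ ω) with h | h
      · rw [if_pos h]
        nlinarith [(h01q ω).1, (h01q ω).2]
      · rw [if_neg (not_le.mpr h)]
        nlinarith [(h01q ω).1, (h01q ω).2]
    have hint : ∫ ω, (l * (q ω * c₁ ω) - (1-l) * (q ω * c₂ ω)) ∂μ
        ≤ ∫ ω, (l * (thresholdPolicy c₁ c₂ l ω * c₁ ω)
            - (1-l) * (thresholdPolicy c₁ c₂ l ω * c₂ ω)) ∂μ :=
      integral_mono ((hA.const_mul l).sub (hC.const_mul (1-l)))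
        ((hFt.const_mul l).sub (hGt.const_mul (1-l))) hpt
    rw [integral_sub (hA.const_mul l) (hC.const_mul (1-l)),
        integral_sub (hFt.const_mul l) (hGt.const_mul (1-l)),
        integral_const_mul, integral_const_mul, integral_const_mul,
        integral_const_mul] at hint
    rw [hsub q hq h01q]
    set A := ∫ ω, q ω * c₁ ω ∂μ with hAdef
    set C := ∫ ω, q ω * c₂ ω ∂μ with hCdef
    set Ft := ∫ ω, thresholdPolicy c₁ c₂ l ω * c₁ ω ∂μ with hFtdef
    set Gt := ∫ ω, thresholdPolicy c₁ c₂ l ω * c₂ ω ∂μ with hGtdef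
    set I₂ := ∫ ω, c₂ ω ∂μ with hI₂def
    have e1 : l * min A (I₂ - C + m) ≤ l * A :=
      mul_le_mul_of_nonneg_left (min_le_left _ _) hlIoo.1.le
    have e2 : (1-l) * min A (I₂ - C + m) ≤ (1-l) * (I₂ - C + m) :=
      mul_le_mul_of_nonneg_left (min_le_right _ _) (by linarith [hlIoo.2])
    have e3 : l * min A (I₂ - C + m) + (1-l) * min A (I₂ - C + m)
        = min A (I₂ - C + m) := by ring
    have e4 : (1-l) * (Ft - (I₂ - Gt + m)) = 0 := by rw [hl0', mul_zero]
    nlinarith [e1, e2, e3, e4, hint]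
  -- sSup characterization
  have hmemS : (∫ ω, thresholdPolicy c₁ c₂ l ω * c₁ ω ∂μ) ∈
      {t : ℝ | ∃ q : Ω → ℝ, Measurable q ∧ (∀ ω, q ω ∈ Set.Icc (0 : ℝ) 1) ∧
        t = min (∫ ω, q ω * c₁ ω ∂μ) ((∫ ω, (1 - q ω) * c₂ ω ∂μ) + m)} :=
    ⟨thresholdPolicy c₁ c₂ l, hqmeas l, hqmem l, by rw [← hbal, min_self]⟩
  have hub : ∀ t ∈ {t : ℝ | ∃ q : Ω → ℝ, Measurable q ∧
      (∀ ω, q ω ∈ Set.Icc (0 : ℝ) 1) ∧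
      t = min (∫ ω, q ω * c₁ ω ∂μ) ((∫ ω, (1 - q ω) * c₂ ω ∂μ) + m)},
      t ≤ ∫ ω, thresholdPolicy c₁ c₂ l ω * c₁ ω ∂μ := by
    rintro t ⟨q, hq, h01q, rfl⟩
    have := hopt q hq h01q
    rwa [← hbal, min_self] at this
  exact ⟨l, hlIoo, hopt,
    le_antisymm (csSup_le ⟨_, hmemS⟩ hub) (le_csSup ⟨_, hub⟩ hmemS), hbal⟩
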